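/- Lower q₀-estimate: let 1 ≤ q₀ < ∞ and let p : ℕ → [1,∞) satisfy p(n) ≤ q₀ for every n. Then for any finite family x₁, …, x_n of bounded sequences with pairwise disjoint supports one has Φ_p(x₁ + ⋯ + x_n) ≥ (∑_{i=1}^n Φ_p(x_i)^{q₀})^{1/q₀}. -/

import Mathlib

/-!
Write `|||·|||_(k)` for `seqNorm`. By induction on `k`, `∑ᵢ |||xᵢ|||_(k)^q₀ ≤ |||∑ᵢ xᵢ|||_(k)^q₀`.
In the step, disjointness means that at most one `xᵢ` sees the new coordinate `c`, so only its
term changes. With `r = q₀ / p ≥ 1` that term is `(aᵖ + cᵖ)^r`, and the claim reduces to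
`vʳ - uʳ ≤ (v + w)ʳ - (u + w)ʳ` for `0 ≤ u ≤ v` and `w ≥ 0`: the increments of the convex
function `u ↦ uʳ` grow under translation. Passing to the supremum over `k` gives the estimate
for `Φ_p`.
-/

open scoped ENNReal

/-- `t ⊞_p s`: for `p < ∞`, `(t^p + s^p)^(1/p)`; for `p = ∞`, `max t s`. -/
noncomputable def boxPlus (p : ℝ≥0∞) (t s : ℝ) : ℝ :=
  if p = ∞ then max t s else (t ^ p.toReal + s ^ p.toReal) ^ (1 / p.toReal)

/-- The recursively defined seminorms `|||x|||_(k)` (0-indexed). -/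
noncomputable def seqNorm (p : ℕ → ℝ≥0∞) (x : ℕ → ℝ) : ℕ → ℝ
  | 0 => boxPlus (p 0) |x 0| |x 1|
  | k + 1 => boxPlus (p (k + 1)) (seqNorm p x k) |x (k + 2)|

/-- `Φ_p(x) = lim_k |||x|||_(k)`, as the supremum of the nondecreasing sequence. -/
noncomputable def Phi (p : ℕ → ℝ≥0∞) (x : ℕ → ℝ) : ℝ≥0∞ :=
  ⨆ k, ENNReal.ofReal (seqNorm p x k)

/-- `x` is a bounded real sequence, i.e. `x ∈ ℓ^∞`. -/
def IsBddSeq (x : ℕ → ℝ) : Prop := ∃ M : ℝ, ∀ n, |x n| ≤ M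

/-- Membership in the variable exponent space `ℓ^{p(·)}`. -/
def MemVLp (p : ℕ → ℝ≥0∞) (x : ℕ → ℝ) : Prop := IsBddSeq x ∧ Phi p x < ⊤

open Finset

theorem ConvexOn.map_add_add_map_le {s : Set ℝ} {f : ℝ → ℝ} (hf : ConvexOn ℝ s f)
    {u v c : ℝ} (hu : u ∈ s) (hvc : v + c ∈ s) (huv : u ≤ v) (hc : 0 ≤ c) :
    f v + f (u + c) ≤ f u + f (v + c) := by
  rcases (add_nonneg (sub_nonneg.2 huv) hc).eq_or_lt with hd | hd
  · obtain rfl : v = u := by linarith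
    obtain rfl : c = 0 := by linarith
    rfl
  -- `v` and `u + c` are the convex combinations of `u` and `v + c` with swapped weights.
  set d := v - u + c
  have hw : c / d + (v - u) / d = 1 := by field_simp; ring
  have h₁ := hf.2 hu hvc (div_nonneg hc hd.le) (div_nonneg (sub_nonneg.2 huv) hd.le) hw
  have h₂ := hf.2 hu hvc (div_nonneg (sub_nonneg.2 huv) hd.le) (div_nonneg hc hd.le)
    (by rw [add_comm, hw])
  rw [smul_eq_mul, smul_eq_mul, show c / d * u + (v - u) / d * (v + c) = v by
    field_simp; ring] at h₁
  rw [smul_eq_mul, smul_eq_mul, show (v - u) / d * u + c / d * (v + c) = u + c by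
    field_simp; ring] at h₂
  linear_combination h₁ + h₂ + (f u + f (v + c)) * hw

section BoxPlus

variable {P : ℝ≥0∞} {t s : ℝ}

lemma boxPlus_nonneg (P : ℝ≥0∞) (ht : 0 ≤ t) (hs : 0 ≤ s) : 0 ≤ boxPlus P t s := by
  unfold boxPlus
  split
  · exact le_max_of_le_left ht
  · positivity

lemma boxPlus_rpow (hP : P ≠ ∞) (ht : 0 ≤ t) (hs : 0 ≤ s) (q : ℝ) :
    boxPlus P t s ^ q = (t ^ P.toReal + s ^ P.toReal) ^ (q / P.toReal) := by
  rw [boxPlus, if_neg hP, ← Real.rpow_mul (by positivity), one_div_mul_eq_div]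

lemma le_boxPlus (hP : P ≠ 0) (ht : 0 ≤ t) (hs : 0 ≤ s) : t ≤ boxPlus P t s := by
  unfold boxPlus
  split_ifs with hP'
  · exact le_max_left t s
  · have hr : 0 < P.toReal := ENNReal.toReal_pos hP hP'
    calc t = (t ^ P.toReal) ^ (1 / P.toReal) := by
          rw [← Real.rpow_mul ht, mul_one_div_cancel hr.ne', Real.rpow_one]
      _ ≤ _ := by gcongr; exact le_add_of_nonneg_right (by positivity)

lemma boxPlus_zero_right (hP : P ≠ 0) (ht : 0 ≤ t) : boxPlus P t 0 = t := by
  unfold boxPlus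
  split_ifs with hP'
  · exact max_eq_left ht
  · have hr : 0 < P.toReal := ENNReal.toReal_pos hP hP'
    rw [Real.zero_rpow hr.ne', add_zero, ← Real.rpow_mul ht, mul_one_div_cancel hr.ne',
      Real.rpow_one]

end BoxPlus

section Step

variable {P : ℝ≥0∞} {q : ℝ}

lemma add_boxPlus_rpow_le (hP : 0 < P.toReal) (hPq : P.toReal ≤ q) {α β c C : ℝ}
    (hα : 0 ≤ α) (hβ : 0 ≤ β) (hc : 0 ≤ c) (hC : 0 ≤ C) (h : α ^ q + C ≤ β ^ q) :
    C + boxPlus P α c ^ q ≤ boxPlus P β c ^ q := by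
  have hP' : P ≠ ∞ := fun h ↦ by simp [h] at hP
  have hq : 0 < q := hP.trans_le hPq
  rw [boxPlus_rpow hP' hα hc, boxPlus_rpow hP' hβ hc]
  have hpow : ∀ t : ℝ, 0 ≤ t → (t ^ P.toReal) ^ (q / P.toReal) = t ^ q := fun t ht ↦ by
    rw [← Real.rpow_mul ht, mul_div_cancel₀ _ hP.ne']
  have hαβ : α ≤ β := (Real.rpow_le_rpow_iff hα hβ hq).1 (by linarith)
  have := (convexOn_rpow ((one_le_div hP).2 hPq)).map_add_add_map_le
    (Real.rpow_nonneg hα _) (Set.mem_Ici.2 (by positivity))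
    (Real.rpow_le_rpow hα hαβ hP.le) (Real.rpow_nonneg hc P.toReal)
  rw [hpow α hα, hpow β hβ] at this
  linarith

variable {ι : Type*} [Fintype ι] {a : ι → ℝ} {A : ℝ} {s : ι → ℝ}

lemma sum_boxPlus_rpow_le_of_forall_ne_eq_zero (hP : 0 < P.toReal) (hPq : P.toReal ≤ q)
    (ha : ∀ i, 0 ≤ a i) (hA : 0 ≤ A) (hsum : ∑ i, a i ^ q ≤ A ^ q) {i₀ : ι}
    (hs₀ : 0 ≤ s i₀) (hs : ∀ i ≠ i₀, s i = 0) :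
    ∑ i, boxPlus P (a i) (s i) ^ q ≤ boxPlus P A (s i₀) ^ q := by
  classical
  have hP0 : P ≠ 0 := fun h ↦ by simp [h] at hP
  have hrest : ∑ i ∈ {i₀}ᶜ, boxPlus P (a i) (s i) ^ q = ∑ i ∈ {i₀}ᶜ, a i ^ q :=
    sum_congr rfl fun i hi ↦ by
      rw [hs i (by simpa using hi), boxPlus_zero_right hP0 (ha i)]
  rw [Fintype.sum_eq_add_sum_compl i₀, hrest, add_comm]
  rw [Fintype.sum_eq_add_sum_compl i₀] at hsum
  exact add_boxPlus_rpow_le hP hPq (ha i₀) hA hs₀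
    (sum_nonneg fun i _ ↦ Real.rpow_nonneg (ha i) q) hsum

lemma sum_boxPlus_rpow_le (hP : 0 < P.toReal) (hPq : P.toReal ≤ q)
    (ha : ∀ i, 0 ≤ a i) (hA : 0 ≤ A) (hsum : ∑ i, a i ^ q ≤ A ^ q)
    (hs : ∀ i, 0 ≤ s i) (hdisj : Pairwise fun i j ↦ s i = 0 ∨ s j = 0) :
    ∑ i, boxPlus P (a i) (s i) ^ q ≤ boxPlus P A (∑ i, s i) ^ q := by
  by_cases h : ∃ i₀, s i₀ ≠ 0
  · obtain ⟨i₀, hi₀⟩ := h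
    have hs' : ∀ i ≠ i₀, s i = 0 := fun i hi ↦ (hdisj hi).resolve_right hi₀
    rw [Fintype.sum_eq_single i₀ hs']
    exact sum_boxPlus_rpow_le_of_forall_ne_eq_zero hP hPq ha hA hsum (hs i₀) hs'
  · push Not at h
    have hP0 : P ≠ 0 := fun h ↦ by simp [h] at hP
    simpa only [h, sum_const_zero, boxPlus_zero_right hP0 (ha _), boxPlus_zero_right hP0 hA]
      using hsum

end Step

lemma apply_sum_of_pairwise {ι M N : Type*} [Fintype ι] [AddCommMonoid M] [AddCommMonoid N]
    {f : M → N} (hf : f 0 = 0) {a : ι → M} (ha : Pairwise fun i j ↦ a i = 0 ∨ a j = 0) :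
    f (∑ i, a i) = ∑ i, f (a i) := by
  by_cases h : ∃ i₀, a i₀ ≠ 0
  · obtain ⟨i₀, hi₀⟩ := h
    have ha' : ∀ i ≠ i₀, a i = 0 := fun i hi ↦ (ha hi).resolve_right hi₀
    rw [Fintype.sum_eq_single i₀ ha', Fintype.sum_eq_single i₀ fun i hi ↦ by rw [ha' i hi, hf]]
  · push Not at h
    simp [h, hf]

section SeqNorm

variable {p : ℕ → ℝ≥0∞}

lemma seqNorm_nonneg (p : ℕ → ℝ≥0∞) (x : ℕ → ℝ) : ∀ k, 0 ≤ seqNorm p x k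
  | 0 => boxPlus_nonneg _ (abs_nonneg _) (abs_nonneg _)
  | k + 1 => boxPlus_nonneg _ (seqNorm_nonneg p x k) (abs_nonneg _)

lemma seqNorm_monotone (hp : ∀ m, p m ≠ 0) (x : ℕ → ℝ) : Monotone (seqNorm p x) :=
  monotone_nat_of_le_succ fun k ↦ le_boxPlus (hp (k + 1)) (seqNorm_nonneg p x k) (abs_nonneg _)

lemma Phi_rpow {q : ℝ} (hq : 0 < q) (x : ℕ → ℝ) :
    Phi p x ^ q = ⨆ k, ENNReal.ofReal (seqNorm p x k ^ q) := by
  rw [Phi, ← ENNReal.orderIsoRpow_apply q hq, OrderIso.map_iSup]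
  exact iSup_congr fun k ↦ ENNReal.ofReal_rpow_of_nonneg (seqNorm_nonneg p x k) hq.le

variable {ι : Type*} [Fintype ι] {q : ℝ}

lemma sum_seqNorm_rpow_le (hp : ∀ m, 0 < (p m).toReal) (hpq : ∀ m, (p m).toReal ≤ q)
    {x : ι → ℕ → ℝ} (hdisj : ∀ m, Pairwise fun i j ↦ x i m = 0 ∨ x j m = 0) (k : ℕ) :
    ∑ i, seqNorm p (x i) k ^ q ≤ seqNorm p (fun m ↦ ∑ i, x i m) k ^ q := by
  have habs : ∀ m, |∑ i, x i m| = ∑ i, |x i m| := fun m ↦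
    apply_sum_of_pairwise abs_zero (hdisj m)
  have habs_disj : ∀ m, Pairwise fun i j ↦ |x i m| = 0 ∨ |x j m| = 0 := fun m i j hij ↦ by
    simpa only [abs_eq_zero] using hdisj m hij
  induction k with
  | zero =>
    have h₀ : ∑ i, |x i 0| ^ q = |∑ i, x i 0| ^ q := by
      rw [habs, apply_sum_of_pairwise (f := (· ^ q))
        (Real.zero_rpow ((hp 0).trans_le (hpq 0)).ne') (habs_disj 0)]
    simpa only [seqNorm, habs 1] using sum_boxPlus_rpow_le (hp 0) (hpq 0)
      (fun i ↦ abs_nonneg (x i 0)) (abs_nonneg _) h₀.le (fun i ↦ abs_nonneg _) (habs_disj 1)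
  | succ k ih =>
    simpa only [seqNorm, habs (k + 2)] using sum_boxPlus_rpow_le (hp (k + 1)) (hpq (k + 1))
      (fun i ↦ seqNorm_nonneg p (x i) k) (seqNorm_nonneg p _ k) ih (fun i ↦ abs_nonneg _)
      (habs_disj (k + 2))

lemma sum_Phi_rpow_le (hp : ∀ m, p m ≠ 0) (hq : 0 < q) {x : ι → ℕ → ℝ} {y : ℕ → ℝ}
    (h : ∀ k, ∑ i, seqNorm p (x i) k ^ q ≤ seqNorm p y k ^ q) :
    ∑ i, Phi p (x i) ^ q ≤ Phi p y ^ q := by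
  simp only [Phi_rpow hq]
  rw [ENNReal.finsetSum_iSup_of_monotone fun i k l hkl ↦ ENNReal.ofReal_le_ofReal
    (Real.rpow_le_rpow (seqNorm_nonneg p (x i) k) (seqNorm_monotone hp (x i) hkl) hq.le)]
  refine iSup_mono fun k ↦ ?_
  rw [← ENNReal.ofReal_sum_of_nonneg fun i _ ↦ Real.rpow_nonneg (seqNorm_nonneg p (x i) k) q]
  exact ENNReal.ofReal_le_ofReal (h k)

end SeqNorm

theorem lower_estimate_general (p : ℕ → ℝ≥0∞) (q₀ : ℝ) (hq₀ : 1 ≤ q₀)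
    (hp1 : ∀ m, 1 ≤ p m) (hp : ∀ m, p m ≤ ENNReal.ofReal q₀)
    (N : ℕ) (x : Fin N → ℕ → ℝ)
    (hdisj : ∀ i j, i ≠ j → ∀ m, x i m = 0 ∨ x j m = 0) :
    (∑ i, Phi p (x i) ^ q₀) ^ (1 / q₀) ≤ Phi p (fun m => ∑ i, x i m) := by
  have hq : 0 < q₀ := zero_lt_one.trans_le hq₀
  have hp0 : ∀ m, p m ≠ 0 := fun m ↦ (zero_lt_one.trans_le (hp1 m)).ne'
  have hpr : ∀ m, 0 < (p m).toReal := fun m ↦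
    ENNReal.toReal_pos (hp0 m) (ne_top_of_le_ne_top ENNReal.ofReal_ne_top (hp m))
  have hpq : ∀ m, (p m).toReal ≤ q₀ := fun m ↦ ENNReal.toReal_le_of_le_ofReal hq.le (hp m)
  have hsum := sum_Phi_rpow_le hp0 hq
    (sum_seqNorm_rpow_le hpr hpq fun m i j hij ↦ hdisj i j hij m)
  calc (∑ i, Phi p (x i) ^ q₀) ^ (1 / q₀)
      ≤ (Phi p (fun m => ∑ i, x i m) ^ q₀) ^ (1 / q₀) :=
        ENNReal.rpow_le_rpow hsum (by positivity)
    _ = Phi p (fun m => ∑ i, x i m) := by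
      rw [← ENNReal.rpow_mul, mul_one_div_cancel hq.ne', ENNReal.rpow_one]

/-- Lower `q₀`-estimate for disjointly supported vectors in `ℓ^{p(·)}`
when `p : ℕ → [1,∞)` satisfies `p(n) ≤ q₀` for all `n`. -/
theorem lower_estimate (p : ℕ → ℝ≥0∞) (q₀ : ℝ) (hq₀ : 1 ≤ q₀)
    (hp1 : ∀ m, 1 ≤ p m) (hp : ∀ m, p m ≤ ENNReal.ofReal q₀)
    (N : ℕ) (x : Fin N → ℕ → ℝ) (hbdd : ∀ i, IsBddSeq (x i))
    (hdisj : ∀ i j, i ≠ j → ∀ m, x i m = 0 ∨ x j m = 0) :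
    (∑ i, Phi p (x i) ^ q₀) ^ (1 / q₀) ≤ Phi p (fun m => ∑ i, x i m) :=
  lower_estimate_general p q₀ hq₀ hp1 hp N x hdisj
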